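/- Crossing paths lemma: let u, v ∈ ℤ⁴↑ be boxes such that the pair (u, v) crosses horizontally. Then every up-right path from u⁻ to u⁺ intersects every up-right path from v⁻ to v⁺. (In particular, if (u,v) crosses horizontally or vertically, then no pair consisting of a u-path and a v-path can be disjoint.) -/

import Mathlib

/-- `SE x y` means `x ↘ y`: `x₁ ≤ y₁` and `x₂ ≥ y₂`. -/
def SE (x y : ℤ × ℤ) : Prop := x.1 ≤ y.1 ∧ y.2 ≤ x.2

/-- A point of `ℤ⁴↑`: a pair `(u⁻, u⁺)` with `u⁻ ≤ u⁺` coordinatewise. -/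
def IsBox (u : (ℤ × ℤ) × (ℤ × ℤ)) : Prop := u.1.1 ≤ u.2.1 ∧ u.1.2 ≤ u.2.2

/-- The pair `(u, v)` crosses horizontally: `u⁻ ↘ v⁻` and `v⁺ ↘ u⁺`. -/
def CrossH (u v : (ℤ × ℤ) × (ℤ × ℤ)) : Prop := SE u.1 v.1 ∧ SE v.2 u.2

/-- The pair `(u, v)` crosses vertically: `v⁻ ↘ u⁻` and `u⁺ ↘ v⁺`. -/
def CrossV (u v : (ℤ × ℤ) × (ℤ × ℤ)) : Prop := SE v.1 u.1 ∧ SE u.2 v.2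

/-- The rectangle in `ℤ²` associated to a box. -/
def boxSet (u : (ℤ × ℤ) × (ℤ × ℤ)) : Set (ℤ × ℤ) :=
  {p | u.1.1 ≤ p.1 ∧ p.1 ≤ u.2.1 ∧ u.1.2 ≤ p.2 ∧ p.2 ≤ u.2.2}

/-- One step of an up-right path: increase exactly one coordinate by 1. -/
def UpStep (a b : ℤ × ℤ) : Prop := b = (a.1 + 1, a.2) ∨ b = (a.1, a.2 + 1)

/-- `IsPath p x y` : `p` is an up-right lattice path from `x` to `y`. -/
def IsPath (p : List (ℤ × ℤ)) (x y : ℤ × ℤ) : Prop :=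
  p.head? = some x ∧ p.getLast? = some y ∧ p.Chain' UpStep

/-- The weight of a path in the environment `M`. -/
noncomputable def pathWeight (M : ℤ × ℤ → ℝ) (p : List (ℤ × ℤ)) : ℝ := (p.map M).sum

/-! Walk along both paths at once, always advancing the one whose current point lies on the lower
antidiagonal `x₁ + x₂ = const`. The current point of the `u`-path stays weakly north-west of the
current point of the `v`-path; this invariant, together with `v⁺ ↘ u⁺`, shows that the path to be
advanced has not yet reached its end. As the remaining length strictly decreases, the two current
points eventually coincide. -/

theorem UpStep.le {a b : ℤ × ℤ} (h : UpStep a b) : a ≤ b := by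
  rcases h with rfl | rfl <;> exact ⟨by simp, by simp⟩

namespace IsPath

variable {p : List (ℤ × ℤ)} {a a' b : ℤ × ℤ} {l : List (ℤ × ℤ)}

theorem eq_cons (hp : IsPath p a b) : ∃ l, p = a :: l := by
  obtain ⟨hhead, -⟩ := hp
  cases p with
  | nil => simp at hhead
  | cons x l => exact ⟨l, by simpa using hhead⟩

theorem eq_of_singleton (hp : IsPath [a] a b) : a = b := by
  simpa using hp.2.1

theorem of_cons_cons (hp : IsPath (a :: a' :: l) a b) : UpStep a a' ∧ IsPath (a' :: l) a' b :=
  have hchain := List.isChain_cons_cons.mp hp.2.2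
  ⟨hchain.1, rfl, by simpa using hp.2.1, hchain.2⟩

theorem le (hp : IsPath p a b) : a ≤ b := by
  obtain ⟨l, rfl⟩ := hp.eq_cons
  induction l generalizing a with
  | nil => exact hp.eq_of_singleton.le
  | cons a' l ih =>
    obtain ⟨hstep, htail⟩ := hp.of_cons_cons
    exact hstep.le.trans (ih htail)

end IsPath

namespace SE

variable {a a' c c' : ℤ × ℤ}

theorem of_upStep_left (h : SE a c) (hlt : a.1 < c.1) (hs : UpStep a a') : SE a' c := by
  unfold SE at *
  rcases hs with rfl | rfl <;> dsimp only <;> omega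

theorem of_upStep_right (h : SE a c) (hlt : c.2 < a.2) (hs : UpStep c c') : SE a c' := by
  unfold SE at *
  rcases hs with rfl | rfl <;> dsimp only <;> omega

end SE

theorem IsPath.exists_mem_mem_of_SE {p q : List (ℤ × ℤ)} {a b c d : ℤ × ℤ}
    (hp : IsPath p a b) (hq : IsPath q c d) (hac : SE a c) (hdb : SE d b) :
    ∃ x, x ∈ p ∧ x ∈ q := by
  obtain ⟨l, rfl⟩ := hp.eq_cons
  obtain ⟨m, rfl⟩ := hq.eq_cons
  by_cases hne : a = c
  · exact ⟨a, List.mem_cons_self, hne ▸ List.mem_cons_self⟩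
  have ⟨hac₁, hac₂⟩ := hac
  have ⟨hdb₁, hdb₂⟩ := hdb
  obtain ⟨-, hab₂⟩ := hp.le
  obtain ⟨hcd₁, -⟩ := hq.le
  rcases le_total (a.1 + a.2) (c.1 + c.2) with hlev | hlev
  · have hlt : a.1 < c.1 := by
      by_contra; exact hne (Prod.ext (by omega) (by omega))
    cases l with
    | nil => obtain rfl := hp.eq_of_singleton; omega
    | cons a' l =>
      obtain ⟨hstep, hp'⟩ := hp.of_cons_cons
      obtain ⟨x, hxp, hxq⟩ := hp'.exists_mem_mem_of_SE hq (hac.of_upStep_left hlt hstep) hdb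
      exact ⟨x, List.mem_cons_of_mem a hxp, hxq⟩
  · have hlt : c.2 < a.2 := by
      by_contra; exact hne (Prod.ext (by omega) (by omega))
    cases m with
    | nil => obtain rfl := hq.eq_of_singleton; omega
    | cons c' m =>
      obtain ⟨hstep, hq'⟩ := hq.of_cons_cons
      obtain ⟨x, hxp, hxq⟩ := hp.exists_mem_mem_of_SE hq' (hac.of_upStep_right hlt hstep) hdb
      exact ⟨x, hxp, List.mem_cons_of_mem c hxq⟩
termination_by p.length + q.length

theorem crossH_paths_intersect_general (u v : (ℤ × ℤ) × (ℤ × ℤ))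
    (h : CrossH u v)
    (p q : List (ℤ × ℤ)) (hp : IsPath p u.1 u.2) (hq : IsPath q v.1 v.2) :
    ∃ x, x ∈ p ∧ x ∈ q :=
  hp.exists_mem_mem_of_SE hq h.1 h.2

/-- If `(u, v)` crosses horizontally, then every `u`-path intersects every `v`-path. -/
theorem crossH_paths_intersect (u v : (ℤ × ℤ) × (ℤ × ℤ))
    (hu : IsBox u) (hv : IsBox v) (h : CrossH u v)
    (p q : List (ℤ × ℤ)) (hp : IsPath p u.1 u.2) (hq : IsPath q v.1 v.2) :
    ∃ x, x ∈ p ∧ x ∈ q :=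
  crossH_paths_intersect_general u v h p q hp hq
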